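/- arXiv:0807.4391 — 4 statements merged into one kernel-verified Lean document; each statement's English description precedes it below -/
import Mathlib

section
/- Let F be a field, s ∈ F nonzero, q = s², and let A, A* be elements of a unital associative F-algebra R satisfying the Askey–Wilson relations [[A,A*]_q, A]_q = −ρA* − ωA − η·1 and [A*,[A,A*]_q]_q = −ρ*A − ωA* − η*·1 for scalars ρ, ρ*, ω, η, η* ∈ F. Then A and A* satisfy the tridiagonal algebra relations [A, [A, [A,A*]_q]_{q⁻¹}] = ρ(AA* − A*A) and [A*, [A*, [A*,A]_q]_{q⁻¹}] = ρ*(A*A − AA*). (This is the natural homomorphism from the tridiagonal algebra onto the Askey–Wilson algebra of the asymmetric exclusion process.) -/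
/-- If `A, A*` satisfy the Askey–Wilson relations
`[[A,A*]_q, A]_q = -ρA* - ωA - η·1` and `[A*,[A,A*]_q]_q = -ρ*A - ωA* - η*·1`
(with `[X,Y]_q = s•XY - s⁻¹•YX`, `q = s²`), then they satisfy the tridiagonal
relations `[A,[A,[A,A*]_q]_{q⁻¹}] = ρ(AA* - A*A)` and
`[A*,[A*,[A*,A]_q]_{q⁻¹}] = ρ*(A*A - AA*)`. -/
theorem stmt_1 {F R : Type*} [Field F] [Ring R] [Algebra F R]
    (s : F) (hs : s ≠ 0) (q : F) (hq : q = s ^ 2)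
    (A As : R) (ρ ρs ω η ηs : F)
    (h1 : s • ((s • (A * As) - s⁻¹ • (As * A)) * A)
            - s⁻¹ • (A * (s • (A * As) - s⁻¹ • (As * A)))
          = -(ρ • As) - ω • A - η • (1 : R))
    (h2 : s • (As * (s • (A * As) - s⁻¹ • (As * A)))
            - s⁻¹ • ((s • (A * As) - s⁻¹ • (As * A)) * As)
          = -(ρs • A) - ω • As - ηs • (1 : R)) :
    (A * (s⁻¹ • (A * (s • (A * As) - s⁻¹ • (As * A)))
            - s • ((s • (A * As) - s⁻¹ • (As * A)) * A))
      - (s⁻¹ • (A * (s • (A * As) - s⁻¹ • (As * A)))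
            - s • ((s • (A * As) - s⁻¹ • (As * A)) * A)) * A
      = ρ • (A * As - As * A))
    ∧
    (As * (s⁻¹ • (As * (s • (As * A) - s⁻¹ • (A * As)))
            - s • ((s • (As * A) - s⁻¹ • (A * As)) * As))
      - (s⁻¹ • (As * (s • (As * A) - s⁻¹ • (A * As)))
            - s • ((s • (As * A) - s⁻¹ • (A * As)) * As)) * As
      = ρs • (As * A - A * As)) := by
  constructor
  · have hD : s⁻¹ • (A * (s • (A * As) - s⁻¹ • (As * A)))
            - s • ((s • (A * As) - s⁻¹ • (As * A)) * A)
        = ρ • As + ω • A + η • (1 : R) := by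
      have : -(s • ((s • (A * As) - s⁻¹ • (As * A)) * A)
            - s⁻¹ • (A * (s • (A * As) - s⁻¹ • (As * A))))
          = -(-(ρ • As) - ω • A - η • (1 : R)) := by rw [h1]
      rw [neg_sub] at this
      rw [this]; abel
    rw [hD]
    simp only [mul_add, add_mul, mul_smul_comm, smul_mul_assoc, smul_sub, mul_one, one_mul]
    abel
  · have hD : s⁻¹ • (As * (s • (As * A) - s⁻¹ • (A * As)))
            - s • ((s • (As * A) - s⁻¹ • (A * As)) * As)
        = ρs • A + ω • As + ηs • (1 : R) := by
      have expand : s⁻¹ • (As * (s • (As * A) - s⁻¹ • (A * As)))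
            - s • ((s • (As * A) - s⁻¹ • (A * As)) * As)
          = -(s • (As * (s • (A * As) - s⁻¹ • (As * A)))
            - s⁻¹ • ((s • (A * As) - s⁻¹ • (As * A)) * As)) := by
        simp only [mul_sub, sub_mul, smul_sub, mul_smul_comm, smul_mul_assoc, smul_smul,
          inv_mul_cancel₀ hs, mul_inv_cancel₀ hs, one_smul, neg_sub, mul_assoc]
        abel
      rw [expand, h2]; abel
    rw [hD]
    simp only [mul_add, add_mul, mul_smul_comm, smul_mul_assoc, smul_sub, mul_one, one_mul]
    abel
end

section
/- Let F be a field, q ∈ F nonzero, and let E0, E1 be elements of a unital associative F-algebra R satisfying E1E0 − qE0E1 = z·1 for some scalar z ∈ F. Then E0 and E1 satisfy the level-zero q-Serre relations of U_q(ŝl₂): [E1, E0E1² − (q+q⁻¹)E1E0E1 + E1²E0] = 0 and [E0, E1E0² − (q+q⁻¹)E0E1E0 + E0²E1] = 0. -/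
set_option linter.unnecessarySeqFocus false

theorem qserre_aux {F R : Type*} [Field F] [Ring R] [Algebra F R]
    (q : F) (hq : q ≠ 0) (z : F) (A B : R)
    (h1 : B * A = q • (A * B) + z • (1 : R)) :
    B * (A * B ^ 2 - (q + q⁻¹) • (B * A * B) + B ^ 2 * A)
      - (A * B ^ 2 - (q + q⁻¹) • (B * A * B) + B ^ 2 * A) * B = 0 := by
  have h2 : ∀ x : R, B * (A * x) = q • (A * (B * x)) + z • x := by
    intro x
    calc B * (A * x) = (B * A) * x := by rw [mul_assoc]
    _ = q • (A * (B * x)) + z • x := by rw [h1]; simp [add_mul, smul_mul_assoc, mul_assoc]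
  have hq' : q * q⁻¹ = 1 := mul_inv_cancel₀ hq
  simp only [pow_two, mul_add, add_mul, mul_sub, sub_mul, mul_assoc, mul_smul_comm,
    smul_mul_assoc, h2, h1, smul_add, smul_smul, mul_one, one_mul, smul_sub]
  match_scalars <;> field_simp <;> ring

/-- If `E1*E0 - q•(E0*E1) = z·1` then `E0, E1` satisfy the
level-zero q-Serre relations of `U_q(ŝl₂)`. -/
theorem stmt_3 {F R : Type*} [Field F] [Ring R] [Algebra F R]
    (q : F) (hq : q ≠ 0) (z : F) (E0 E1 : R)
    (h : E1 * E0 - q • (E0 * E1) = z • (1 : R)) :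
    E1 * (E0 * E1 ^ 2 - (q + q⁻¹) • (E1 * E0 * E1) + E1 ^ 2 * E0)
      - (E0 * E1 ^ 2 - (q + q⁻¹) • (E1 * E0 * E1) + E1 ^ 2 * E0) * E1 = 0
    ∧ E0 * (E1 * E0 ^ 2 - (q + q⁻¹) • (E0 * E1 * E0) + E0 ^ 2 * E1)
      - (E1 * E0 ^ 2 - (q + q⁻¹) • (E0 * E1 * E0) + E0 ^ 2 * E1) * E0 = 0 := by
  have h1 : E1 * E0 = q • (E0 * E1) + z • (1 : R) := by
    rw [← h]; abel
  have h1' : E0 * E1 = q⁻¹ • (E1 * E0) + (-(q⁻¹ * z)) • (1 : R) := by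
    rw [h1, smul_add, smul_smul, smul_smul, inv_mul_cancel₀ hq, one_smul, neg_smul]
    abel
  constructor
  · exact qserre_aux q hq z E0 E1 h1
  · have := qserre_aux q⁻¹ (inv_ne_zero hq) (-(q⁻¹ * z)) E1 E0 h1'
    rwa [inv_inv, add_comm q⁻¹ q] at this
end

section
/- Let F be a field, q ∈ F with q ≠ 0 and q ≠ 1, and let D0, D1 be elements of a unital associative F-algebra R satisfying D1D0 − qD0D1 = x1D0 − x0D1 with x0, x1 ∈ F. Then the affinely shifted operators E1 := D1 + x1/(q−1)·1 and E0 := D0 − x0/(q−1)·1 satisfy the level-zero q-Serre relations [E1, E0E1² − (q+q⁻¹)E1E0E1 + E1²E0] = 0 and [E0, E1E0² − (q+q⁻¹)E0E1E0 + E0²E1] = 0, i.e. the bulk tridiagonal algebra of the asymmetric exclusion process is the level-zero U_q(ŝl₂) adjoint algebra. -/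
/-- If `D1*D0 - q•(D0*D1) = x1•D0 - x0•D1` with `q ≠ 0, 1`, then
the shifted operators `E1 = D1 + (x1/(q-1))·1`, `E0 = D0 - (x0/(q-1))·1`
satisfy the level-zero q-Serre relations
`[E1, E0E1² - (q+q⁻¹)E1E0E1 + E1²E0] = 0` and
`[E0, E1E0² - (q+q⁻¹)E0E1E0 + E0²E1] = 0`. -/
theorem stmt_5 {F R : Type*} [Field F] [Ring R] [Algebra F R]
    (q : F) (hq0 : q ≠ 0) (hq1 : q ≠ 1) (x0 x1 : F) (D0 D1 : R)
    (h : D1 * D0 - q • (D0 * D1) = x1 • D0 - x0 • D1)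
    (E0 E1 : R)
    (hE0 : E0 = D0 - (x0 / (q - 1)) • (1 : R))
    (hE1 : E1 = D1 + (x1 / (q - 1)) • (1 : R)) :
    E1 * (E0 * E1 ^ 2 - (q + q⁻¹) • (E1 * E0 * E1) + E1 ^ 2 * E0)
      - (E0 * E1 ^ 2 - (q + q⁻¹) • (E1 * E0 * E1) + E1 ^ 2 * E0) * E1 = 0
    ∧ E0 * (E1 * E0 ^ 2 - (q + q⁻¹) • (E0 * E1 * E0) + E0 ^ 2 * E1)
      - (E1 * E0 ^ 2 - (q + q⁻¹) • (E0 * E1 * E0) + E0 ^ 2 * E1) * E0 = 0 := by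
  have hq1' : q - 1 ≠ 0 := sub_ne_zero.mpr hq1
  have hq2 : (-1 : F) + q ≠ 0 := by rwa [add_comm, ← sub_eq_add_neg]
  have hc : True := trivial
  have hD : D1 * D0 = x1 • D0 - x0 • D1 + q • (D0 * D1) := sub_eq_iff_eq_add.mp h
  have key : E1 * E0 = q • (E0 * E1) + (x0 * x1 / (q - 1)) • (1 : R) := by
    subst hE0 hE1
    simp only [mul_sub, sub_mul, mul_add, add_mul, smul_mul_assoc, mul_smul_comm,
      one_mul, mul_one, smul_smul, smul_add, smul_sub]
    rw [hD]
    match_scalars <;> field_simp [hq2] <;> ring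
  -- first relation
  have h1 : E1 * E0 * E1 = q • (E0 * E1 ^ 2) + (x0 * x1 / (q - 1)) • E1 := by
    rw [key, add_mul, smul_mul_assoc, smul_mul_assoc, one_mul, sq, mul_assoc]
  have h2 : E1 ^ 2 * E0 = (q ^ 2) • (E0 * E1 ^ 2) + ((q + 1) * (x0 * x1 / (q - 1))) • E1 := by
    have : E1 ^ 2 * E0 = E1 * (E1 * E0) := by rw [sq, mul_assoc]
    rw [this, key, mul_add, mul_smul_comm, mul_smul_comm, mul_one, ← mul_assoc, h1]
    match_scalars <;> field_simp [hq2] <;> ring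
  have hS : E0 * E1 ^ 2 - (q + q⁻¹) • (E1 * E0 * E1) + E1 ^ 2 * E0
      = ((1 - q⁻¹) * (x0 * x1 / (q - 1))) • E1 := by
    rw [h1, h2]
    match_scalars <;> field_simp [hq2] <;> ring
  -- second relation
  have h1' : E0 * E1 * E0 = q • (E0 ^ 2 * E1) + (x0 * x1 / (q - 1)) • E0 := by
    have : E0 * E1 * E0 = E0 * (E1 * E0) := by rw [mul_assoc]
    rw [this, key, mul_add, mul_smul_comm, mul_smul_comm, mul_one, ← mul_assoc, ← sq]
  have h2' : E1 * E0 ^ 2 = (q ^ 2) • (E0 ^ 2 * E1) + ((q + 1) * (x0 * x1 / (q - 1))) • E0 := by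
    have : E1 * E0 ^ 2 = E1 * E0 * E0 := by rw [sq, mul_assoc]
    rw [this, key, add_mul, smul_mul_assoc, smul_mul_assoc, one_mul, h1']
    match_scalars <;> field_simp [hq2] <;> ring
  have hS' : E1 * E0 ^ 2 - (q + q⁻¹) • (E0 * E1 * E0) + E0 ^ 2 * E1
      = ((1 - q⁻¹) * (x0 * x1 / (q - 1))) • E0 := by
    rw [h1', h2']
    match_scalars <;> field_simp [hq2] <;> ring
  refine ⟨?_, ?_⟩
  · rw [hS, mul_smul_comm, smul_mul_assoc, sub_self]
  · rw [hS', mul_smul_comm, smul_mul_assoc, sub_self]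
end

section
/- Let R be a unital associative algebra over a field F of characteristic zero, and let p, m, n ∈ R satisfy the sl(2) commutation relations [n,p] = p, [n,m] = −m, [m,p] = 2n. Then for A = a₁p + a₂m + a₃n and Y = b₁p + b₂m + b₃n with a₁,a₂,a₃,b₁,b₂,b₃ ∈ F, the triple commutator identity [A, [A, [A, Y]]] = (a₃² − 4a₁a₂)[A, Y] holds. -/
/-- For an sl(2) triple `p, m, n` with `[n,p] = p`, `[n,m] = -m`,
`[m,p] = 2n`, and `A = a1•p + a2•m + a3•n`, `Y = b1•p + b2•m + b3•n`, the
triple commutator identity `[A,[A,[A,Y]]] = (a3² - 4a1a2)[A,Y]` holds. -/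
theorem stmt_6 {F R : Type*} [Field F] [CharZero F] [Ring R] [Algebra F R]
    (p m n : R)
    (hnp : n * p - p * n = p)
    (hnm : n * m - m * n = -m)
    (hmp : m * p - p * m = 2 • n)
    (a1 a2 a3 b1 b2 b3 : F)
    (A Y : R)
    (hA : A = a1 • p + a2 • m + a3 • n)
    (hY : Y = b1 • p + b2 • m + b3 • n) :
    A * (A * (A * Y - Y * A) - (A * Y - Y * A) * A)
      - (A * (A * Y - Y * A) - (A * Y - Y * A) * A) * A
      = (a3 ^ 2 - 4 * a1 * a2) • (A * Y - Y * A) := by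
  have hpm : p * m = m * p - 2 • n := by rw [← hmp]; abel
  have hpn : p * n = n * p - p := by
    rw [sub_eq_iff_eq_add] at hnp; rw [hnp]; abel
  have hmn : m * n = n * m + m := by
    rw [sub_eq_iff_eq_add] at hnm; rw [hnm]; abel
  have key : ∀ c1 c2 c3 : F,
      A * (c1 • p + c2 • m + c3 • n) - (c1 • p + c2 • m + c3 • n) * A
        = (a3 * c1 - a1 * c3) • p + (a2 * c3 - a3 * c2) • m
          + (2 * a2 * c1 - 2 * a1 * c2) • n := by
    intro c1 c2 c3
    rw [hA]
    simp only [add_mul, mul_add, smul_mul_assoc, mul_smul_comm, hpm, hpn, hmn,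
      smul_add, smul_sub]
    module
  rw [hY, key b1 b2 b3, key _ _ _, key _ _ _]
  module
end
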